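/- Let B be a k-step nilpotent finite-dimensional Lie algebra over a field K of characteristic zero and let w : B × B → B* be a cyclic 2-cocycle. Then the T*-extension T*_w B is n-step nilpotent for some n with k ≤ n ≤ 2k. -/
import Mathlib


open Module

variable {K B : Type*}

/-- The T*-extension bracket `[b+β, b'+β'] = [b,b'] + w(b,b') + ad*(b)(β') − ad*(b')(β)`
on `B ⊕ B*`, where `ad*(b)(β) = −β ∘ ad(b)`. -/
def tLieBr [Field K] [LieRing B] [LieAlgebra K B]
    (w : B →ₗ[K] B →ₗ[K] Module.Dual K B)
    (X Y : B × Module.Dual K B) : B × Module.Dual K B :=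
  (⁅X.1, Y.1⁆,
    w X.1 Y.1 + (-(Y.2 ∘ₗ (LieAlgebra.ad K B X.1))) - (-(X.2 ∘ₗ (LieAlgebra.ad K B Y.1))))

/-- The lower central series of a bracket `P` on a vector space `L`:
`L¹ = L`, `L^{k+1} = span {P x y : y ∈ L^k}`; here `brLCS P k` is the `(k+1)`-st term. -/
def brLCS (K : Type*) {L : Type*} [Field K] [AddCommGroup L] [Module K L]
    (P : L → L → L) : ℕ → Submodule K L
  | 0 => ⊤
  | n + 1 => Submodule.span K {z | ∃ x y, y ∈ brLCS K P n ∧ z = P x y}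

section Aux

variable [Field K] [LieRing B] [LieAlgebra K B]
  (w : B →ₗ[K] B →ₗ[K] Module.Dual K B)

/-- The first component of anything in the `m`-th term of the lower central series of the
T*-extension lies in the `m`-th term of the lower central series of `B`. -/
lemma brLCS_fst_le (m : ℕ) :
    brLCS K (tLieBr w) m ≤
      ((LieModule.lowerCentralSeries K B B m : LieSubmodule K B B) : Submodule K B).comap
        (LinearMap.fst K B (Module.Dual K B)) := by
  induction m with
  | zero => simp [brLCS]
  | succ n ih =>
    rw [brLCS]
    refine Submodule.span_le.2 ?_
    rintro z ⟨x, y, hy, rfl⟩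
    have h1 : y.1 ∈ LieModule.lowerCentralSeries K B B n := ih hy
    simp only [Submodule.mem_comap, LinearMap.fst_apply, tLieBr]
    rw [LieModule.lowerCentralSeries_succ]
    exact LieSubmodule.lie_mem_lie (LieSubmodule.mem_top _) h1

/-- The `m`-th term of the lower central series of `B` is covered by the `m`-th term of the
lower central series of the T*-extension. -/
lemma lcs_le_map_fst (m : ℕ) :
    ∀ b ∈ LieModule.lowerCentralSeries K B B m,
      ∃ Y ∈ brLCS K (tLieBr w) m, Y.1 = b := by
  induction m with
  | zero =>
    intro b _
    exact ⟨(b, 0), by simp [brLCS], rfl⟩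
  | succ n ih =>
    intro b hb
    rw [LieModule.lowerCentralSeries_succ] at hb
    have hb' : b ∈ Submodule.span K
        { m | ∃ x ∈ (⊤ : LieIdeal K B), ∃ y ∈ LieModule.lowerCentralSeries K B B n,
            ⁅x, y⁆ = m } := by
      rw [← LieSubmodule.lieIdeal_oper_eq_linear_span']
      exact hb
    have hspan : Submodule.span K
        { m | ∃ x ∈ (⊤ : LieIdeal K B), ∃ y ∈ LieModule.lowerCentralSeries K B B n,
            ⁅x, y⁆ = m } ≤
        (brLCS K (tLieBr w) (n + 1)).map (LinearMap.fst K B (Module.Dual K B)) := by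
      refine Submodule.span_le.2 ?_
      rintro z ⟨x, -, c, hc, rfl⟩
      obtain ⟨Y, hY, hY1⟩ := ih c hc
      refine ⟨tLieBr w (x, 0) Y, ?_, by simp [tLieBr, hY1]⟩
      rw [brLCS]
      exact Submodule.subset_span ⟨(x, 0), Y, hY, rfl⟩
    obtain ⟨Y, hY, h1⟩ := hspan hb'
    exact ⟨Y, hY, h1⟩

/-- If the series of `B` vanishes at step `k`, then past step `k` the dual component of the
series of the T*-extension annihilates ever larger terms of the series of `B`. -/
lemma brLCS_ge_k (k : ℕ) (hstep : LieModule.lowerCentralSeries K B B k = ⊥) (j : ℕ) :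
    brLCS K (tLieBr w) (k + j) ≤
      (⊥ : Submodule K B).prod
        (((LieModule.lowerCentralSeries K B B (k - j) : LieSubmodule K B B) :
          Submodule K B).dualAnnihilator) := by
  induction j with
  | zero =>
    intro Y hY
    have h1 := brLCS_fst_le w k hY
    rw [hstep] at h1
    refine Submodule.mem_prod.2 ⟨h1, ?_⟩
    rw [Submodule.mem_dualAnnihilator]
    intro c hc
    rw [Nat.sub_zero, hstep] at hc
    have : c = 0 := by simpa using hc
    simp [this]
  | succ n ih =>
    rw [show k + (n + 1) = (k + n) + 1 by ring, brLCS]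
    refine Submodule.span_le.2 ?_
    rintro z ⟨x, y, hy, rfl⟩
    have hmem := ih hy
    have hy1 : y.1 = 0 := by simpa using (Submodule.mem_prod.1 hmem).1
    have hy2 := (Submodule.mem_prod.1 hmem).2
    rw [Submodule.mem_dualAnnihilator] at hy2
    refine Submodule.mem_prod.2 ⟨by simp [tLieBr, hy1], ?_⟩
    rw [Submodule.mem_dualAnnihilator]
    intro c hc
    have hbr : ⁅x.1, c⁆ ∈ LieModule.lowerCentralSeries K B B (k - n) := by
      have h1 : ⁅x.1, c⁆ ∈ LieModule.lowerCentralSeries K B B ((k - (n + 1)) + 1) := by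
        rw [LieModule.lowerCentralSeries_succ]
        exact LieSubmodule.lie_mem_lie (LieSubmodule.mem_top _) hc
      exact LieModule.antitone_lowerCentralSeries K B B (by omega) h1
    simp [tLieBr, hy1, LieAlgebra.ad_apply, hy2 _ hbr]

/-- Once the series of the T*-extension hits `⊥`, it stays there. -/
lemma brLCS_bot_mono (m m' : ℕ) (h : m ≤ m') (hbot : brLCS K (tLieBr w) m = ⊥) :
    brLCS K (tLieBr w) m' = ⊥ := by
  induction m' with
  | zero => exact le_antisymm (h.antisymm (Nat.zero_le m) ▸ hbot.le) bot_le
  | succ n ih =>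
    rcases Nat.lt_or_ge m (n + 1) with hlt | hge
    · have hn : brLCS K (tLieBr w) n = ⊥ := ih (by omega)
      rw [brLCS, eq_bot_iff]
      refine Submodule.span_le.2 ?_
      rintro z ⟨x, y, hy, rfl⟩
      rw [hn] at hy
      have : y = 0 := by simpa using hy
      subst this
      simp [tLieBr, Prod.ext_iff]
    · have : m = n + 1 := le_antisymm h hge
      rw [← this]; exact hbot

end Aux

/-- If `B` is a `k`-step nilpotent Lie algebra and `w` is a cyclic 2-cocycle, then the
T*-extension `T*_w B` is `n`-step nilpotent for some `n` with `k ≤ n ≤ 2k`. -/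
theorem stmt9 [Field K] [CharZero K] [LieRing B] [LieAlgebra K B] [FiniteDimensional K B]
    (w : B →ₗ[K] B →ₗ[K] Module.Dual K B)
    (hcyc : ∀ a b c : B, w a b c = w c a b ∧ w c a b = w b c a)
    (hskew : ∀ a b : B, w a b = - w b a)
    (hcoc : ∀ a b c : B, w ⁅a, b⁆ c + w ⁅b, c⁆ a + w ⁅c, a⁆ b =
      -((w b c) ∘ₗ (LieAlgebra.ad K B a)) + -((w c a) ∘ₗ (LieAlgebra.ad K B b)) +
        -((w a b) ∘ₗ (LieAlgebra.ad K B c)))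
    (k : ℕ) (hk : 1 ≤ k)
    (hstep : LieModule.lowerCentralSeries K B B k = ⊥)
    (hstep' : LieModule.lowerCentralSeries K B B (k - 1) ≠ ⊥) :
    ∃ n : ℕ, k ≤ n ∧ n ≤ 2 * k ∧
      brLCS K (tLieBr w) n = ⊥ ∧ brLCS K (tLieBr w) (n - 1) ≠ ⊥ := by
  -- the series of the T*-extension vanishes at step 2k
  classical
  have h2k : brLCS K (tLieBr w) (2 * k) = ⊥ := by
    have h := brLCS_ge_k w k hstep k
    rw [Nat.sub_self] at h
    rw [two_mul, eq_bot_iff]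
    intro Y hY
    have hm := h hY
    have h1 : Y.1 = 0 := by simpa using (Submodule.mem_prod.1 hm).1
    have h2 := (Submodule.mem_prod.1 hm).2
    rw [show ((LieModule.lowerCentralSeries K B B 0 : LieSubmodule K B B) : Submodule K B)
        = ⊤ from rfl, Submodule.dualAnnihilator_top] at h2
    have h2' : Y.2 = 0 := by simpa using h2
    simp [Submodule.mem_bot, Prod.ext_iff, h1, h2']
  -- the series of the T*-extension does not vanish at step k - 1
  have hkm1 : brLCS K (tLieBr w) (k - 1) ≠ ⊥ := by
    intro hbot
    apply hstep'
    rw [LieSubmodule.eq_bot_iff]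
    intro b hb
    obtain ⟨Y, hY, hY1⟩ := lcs_le_map_fst w (k - 1) b hb
    rw [hbot] at hY
    have : Y = 0 := by simpa using hY
    rw [← hY1, this]
    rfl
  have hex : ∃ n : ℕ, brLCS K (tLieBr w) n = ⊥ := ⟨2 * k, h2k⟩
  refine ⟨Nat.find hex, ?_, ?_, Nat.find_spec hex, ?_⟩
  · by_contra h
    exact hkm1 (brLCS_bot_mono w _ _ (by omega) (Nat.find_spec hex))
  · exact Nat.find_le h2k
  · have hge : k ≤ Nat.find hex := by
      by_contra h
      exact hkm1 (brLCS_bot_mono w _ _ (by omega) (Nat.find_spec hex))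
    exact Nat.find_min hex (by omega)
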